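/- arXiv:1910.00615 — 4 statements merged into one kernel-verified Lean document; each statement's English description precedes it below -/
import Mathlib

section
/- The function ℓ(α) = 1/cos α + tan α + (3/2)π − 2α + 1, defined for α ∈ (0, π/2), attains its minimum at α = π/6, and ℓ(π/6) = (7/6)π + 1 + √3. -/
/-!
Since `d/dα (sec α + tan α) = (1 + sin α) / cos² α = 1 / (1 - sin α)`, the derivative of `ℓ` is
`1 / (1 - sin α) - 2`, which is negative for `sin α < 1/2` and positive for `sin α > 1/2`.
So `ℓ` decreases on `(0, π/6]` and increases on `[π/6, π/2)`.
-/

open Real Set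

theorem isMinOn_of_antitoneOn_Ioc_of_monotoneOn_Ico {α β : Type*} [LinearOrder α] [Preorder β]
    {f : α → β} {a b c : α} (hab : AntitoneOn f (Ioc a b)) (hbc : MonotoneOn f (Ico b c))
    (hb : b ∈ Ioo a c) : IsMinOn f (Ioo a c) b := by
  intro x hx
  rcases le_total x b with hxb | hbx
  · exact hab ⟨hx.1, hxb⟩ ⟨hb.1, le_rfl⟩ hxb
  · exact hbc ⟨le_rfl, hb.2⟩ ⟨hbx, hx.2⟩ hbx

theorem Real.hasDerivAt_one_div_cos_add_tan {x : ℝ} (hx : cos x ≠ 0) :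
    HasDerivAt (fun y => 1 / cos y + tan y) (1 / (1 - sin x)) x := by
  have hsec : HasDerivAt (fun y => 1 / cos y) (sin x / cos x ^ 2) x := by
    simpa [one_div, neg_div] using (hasDerivAt_cos x).fun_inv hx
  have hsin : 1 - sin x ≠ 0 := by
    intro h
    have : cos x ^ 2 = 0 := by nlinarith [sin_sq_add_cos_sq x]
    exact hx (pow_eq_zero_iff two_ne_zero |>.mp this)
  refine (hsec.add (hasDerivAt_tan hx)).congr_deriv ?_
  rw [← add_div, cos_sq', div_eq_div_iff (by simpa [← cos_sq'] using hx) hsin]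
  ring

noncomputable def hunterLength (α : ℝ) : ℝ :=
  1 / cos α + tan α + (3 / 2) * π - 2 * α + 1

theorem hasDerivAt_hunterLength {x : ℝ} (hx : x ∈ Ioo 0 (π / 2)) :
    HasDerivAt hunterLength (1 / (1 - sin x) - 2) x := by
  have hcos : cos x ≠ 0 := (cos_pos_of_mem_Ioo ⟨by linarith [hx.1, pi_pos], hx.2⟩).ne'
  exact (((hasDerivAt_one_div_cos_add_tan hcos).add_const _).sub
    ((hasDerivAt_id x).const_mul 2) |>.add_const 1).congr_deriv (by ring)

theorem continuousOn_hunterLength : ContinuousOn hunterLength (Ioo 0 (π / 2)) :=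
  fun _ hx => (hasDerivAt_hunterLength hx).continuousAt.continuousWithinAt

theorem antitoneOn_hunterLength : AntitoneOn hunterLength (Ioc 0 (π / 6)) := by
  have hsub : Ioc 0 (π / 6) ⊆ Ioo 0 (π / 2) := fun x hx => ⟨hx.1, by linarith [hx.2, pi_pos]⟩
  refine antitoneOn_of_hasDerivWithinAt_nonpos (convex_Ioc _ _)
    (continuousOn_hunterLength.mono hsub)
    (fun x hx => (hasDerivAt_hunterLength (hsub (interior_subset hx))).hasDerivWithinAt) ?_
  rw [interior_Ioc]
  rintro x ⟨hx₀, hx⟩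
  have hsin : sin x < 1 / 2 := by
    simpa using sin_lt_sin_of_lt_of_le_pi_div_two (by linarith [pi_pos]) (by linarith [pi_pos]) hx
  rw [sub_nonpos, div_le_iff₀ (by linarith)]
  linarith

theorem monotoneOn_hunterLength : MonotoneOn hunterLength (Ico (π / 6) (π / 2)) := by
  have hsub : Ico (π / 6) (π / 2) ⊆ Ioo 0 (π / 2) := fun x hx => ⟨by linarith [hx.1, pi_pos], hx.2⟩
  refine monotoneOn_of_hasDerivWithinAt_nonneg (convex_Ico _ _)
    (continuousOn_hunterLength.mono hsub)
    (fun x hx => (hasDerivAt_hunterLength (hsub (interior_subset hx))).hasDerivWithinAt) ?_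
  rw [interior_Ico]
  rintro x ⟨hx, hx₁⟩
  have hsin : 1 / 2 < sin x := by
    simpa using sin_lt_sin_of_lt_of_le_pi_div_two (by linarith [pi_pos]) hx₁.le hx
  have hsin₁ : sin x < 1 := by
    rw [← sin_pi_div_two]
    exact sin_lt_sin_of_lt_of_le_pi_div_two (by linarith [pi_pos]) le_rfl hx₁
  rw [sub_nonneg, le_div_iff₀ (by linarith)]
  linarith

theorem hunterLength_pi_div_six : hunterLength (π / 6) = (7 / 6) * π + 1 + √3 := by
  rw [hunterLength, tan_eq_sin_div_cos, sin_pi_div_six, cos_pi_div_six]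
  have h3 : √3 * √3 = 3 := mul_self_sqrt (by norm_num)
  field_simp
  nlinarith [h3]

theorem hunter_length_min_at_pi_div_six :
    IsMinOn (fun α : ℝ => 1 / Real.cos α + Real.tan α + (3 / 2) * Real.pi - 2 * α + 1)
      (Set.Ioo 0 (Real.pi / 2)) (Real.pi / 6) ∧
    1 / Real.cos (Real.pi / 6) + Real.tan (Real.pi / 6) + (3 / 2) * Real.pi
        - 2 * (Real.pi / 6) + 1
      = (7 / 6) * Real.pi + 1 + Real.sqrt 3 :=
  ⟨isMinOn_of_antitoneOn_Ioc_of_monotoneOn_Ico antitoneOn_hunterLength monotoneOn_hunterLength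
      ⟨by positivity, by linarith [pi_pos]⟩,
    hunterLength_pi_div_six⟩
end

section
/- For all α ∈ (0, π/2), we have 1/cos α + tan α + (3/2)π − 2α + 1 ≥ (7/6)π + 1 + √3, with equality iff α = π/6. -/
/-!
Up to a constant, the length is `1 / cos α + tan α - 2 α`. Its derivative is
`(2 sin α - 1) (sin α + 1) / cos² α`, which has the sign of `sin α - 1 / 2`, so the function
strictly decreases on `[0, π/6]`, strictly increases on `[π/6, π/2)`, and its strict minimum is
`2/√3 + 1/√3 - π/3 = √3 - π/3`.
-/

open Real Set

noncomputable def secAddTanSubTwoMul (x : ℝ) : ℝ := 1 / cos x + tan x - 2 * x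

lemma hasDerivAt_secAddTanSubTwoMul {x : ℝ} (hx : cos x ≠ 0) :
    HasDerivAt secAddTanSubTwoMul ((2 * sin x - 1) * (sin x + 1) / cos x ^ 2) x := by
  have hsec := (hasDerivAt_const x (1 : ℝ)).div (hasDerivAt_cos x) hx
  have hlin : HasDerivAt (fun y : ℝ => 2 * y) 2 x := by
    simpa using (hasDerivAt_id x).const_mul (2 : ℝ)
  have h : HasDerivAt secAddTanSubTwoMul _ x := (hsec.add (hasDerivAt_tan hx)).sub hlin
  convert h using 1
  field_simp
  nlinarith [sin_sq_add_cos_sq x]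

lemma cos_pos_of_nonneg_of_lt_pi_div_two {x : ℝ} (h₀ : 0 ≤ x) (h : x < π / 2) : 0 < cos x :=
  cos_pos_of_mem_Ioo ⟨by linarith [pi_pos], h⟩

lemma strictAntiOn_secAddTanSubTwoMul : StrictAntiOn secAddTanSubTwoMul (Icc 0 (π / 6)) := by
  have hcos : ∀ x ∈ Icc 0 (π / 6), 0 < cos x := fun x hx =>
    cos_pos_of_nonneg_of_lt_pi_div_two hx.1 (by linarith [hx.2, pi_pos])
  refine strictAntiOn_of_deriv_neg (convex_Icc _ _) (fun x hx => ?_) (fun x hx => ?_)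
  · exact (hasDerivAt_secAddTanSubTwoMul (hcos x hx).ne').continuousAt.continuousWithinAt
  · rw [interior_Icc] at hx
    have hc := hcos x (Ioo_subset_Icc_self hx)
    rw [(hasDerivAt_secAddTanSubTwoMul hc.ne').deriv]
    have hsin_lt : sin x < 1 / 2 := by
      simpa using sin_lt_sin_of_lt_of_le_pi_div_two (by linarith [hx.1, pi_pos])
        (by linarith [pi_pos]) hx.2
    have hsin_pos : 0 < sin x := sin_pos_of_pos_of_lt_pi hx.1 (by linarith [hx.2, pi_pos])
    exact div_neg_of_neg_of_pos (by nlinarith) (by positivity)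

lemma strictMonoOn_secAddTanSubTwoMul :
    StrictMonoOn secAddTanSubTwoMul (Ico (π / 6) (π / 2)) := by
  have hcos : ∀ x ∈ Ico (π / 6) (π / 2), 0 < cos x := fun x hx =>
    cos_pos_of_nonneg_of_lt_pi_div_two (by linarith [hx.1, pi_pos]) hx.2
  refine strictMonoOn_of_deriv_pos (convex_Ico _ _) (fun x hx => ?_) (fun x hx => ?_)
  · exact (hasDerivAt_secAddTanSubTwoMul (hcos x hx).ne').continuousAt.continuousWithinAt
  · rw [interior_Ico] at hx
    have hc := hcos x (Ioo_subset_Ico_self hx)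
    rw [(hasDerivAt_secAddTanSubTwoMul hc.ne').deriv]
    have hsin_gt : 1 / 2 < sin x := by
      simpa using sin_lt_sin_of_lt_of_le_pi_div_two (by linarith [pi_pos]) hx.2.le hx.1
    exact div_pos (by nlinarith) (by positivity)

lemma secAddTanSubTwoMul_pi_div_six : secAddTanSubTwoMul (π / 6) = √3 - π / 3 := by
  have hsqrt : √3 * √3 = 3 := mul_self_sqrt (by norm_num)
  rw [secAddTanSubTwoMul, tan_eq_sin_div_cos, sin_pi_div_six, cos_pi_div_six]
  field_simp
  nlinarith [hsqrt]

lemma secAddTanSubTwoMul_pi_div_six_lt {x : ℝ} (hx : x ∈ Ioo 0 (π / 2)) (hne : x ≠ π / 6) :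
    secAddTanSubTwoMul (π / 6) < secAddTanSubTwoMul x := by
  rcases hne.lt_or_gt with h | h
  · exact strictAntiOn_secAddTanSubTwoMul ⟨hx.1.le, h.le⟩ ⟨by linarith [pi_pos], le_rfl⟩ h
  · exact strictMonoOn_secAddTanSubTwoMul ⟨le_rfl, by linarith [pi_pos]⟩ ⟨h.le, hx.2⟩ h

theorem hunter_length_ge_with_equality_iff (α : ℝ) (hα : α ∈ Set.Ioo 0 (Real.pi / 2)) :
    1 / Real.cos α + Real.tan α + (3 / 2) * Real.pi - 2 * α + 1
      ≥ (7 / 6) * Real.pi + 1 + Real.sqrt 3 ∧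
    (1 / Real.cos α + Real.tan α + (3 / 2) * Real.pi - 2 * α + 1
      = (7 / 6) * Real.pi + 1 + Real.sqrt 3 ↔ α = Real.pi / 6) := by
  have hlength : 1 / cos α + tan α + (3 / 2) * π - 2 * α + 1
      = secAddTanSubTwoMul α + (3 / 2) * π + 1 := by
    rw [secAddTanSubTwoMul]; ring
  have hoptimum : (7 / 6) * π + 1 + √3 = secAddTanSubTwoMul (π / 6) + (3 / 2) * π + 1 := by
    rw [secAddTanSubTwoMul_pi_div_six]; ring
  rw [hlength, hoptimum]
  rcases eq_or_ne α (π / 6) with rfl | hne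
  · simp
  · have hlt := secAddTanSubTwoMul_pi_div_six_lt hα hne
    exact ⟨by linarith, iff_of_false (by linarith) hne⟩
end

section
/- A connected compact set S in the plane intersects every support line of a convex compact set D if and only if D ⊆ convexHull(S). -/
/-!
If `D ⊆ conv S` and the line `⟪u, ·⟫ = c` meets `D`, then `c` lies in the image of `conv S` under
`⟪u, ·⟫`, which is the convex hull of the image of `S`; that image is an interval because `S` is
connected, so the line meets `S`. Conversely, in finite dimension `conv S` is compact, so a point
of `D` outside it is strictly separated from it by some `u`, and the support line of `D` with outer
normal `u` misses `S`.
-/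

open Function Module Set

theorem Function.Injective.sum_extend₂ {ι κ α β M : Type*} [Fintype ι] [Fintype κ]
    [AddCommMonoid M] {e : ι → κ} (he : Injective e) (F : α → β → M) (w : ι → α) (z : ι → β)
    {a₀ : α} (b₀ : β) (hF : ∀ b, F a₀ b = 0) :
    ∑ j, F (extend e w (fun _ => a₀) j) (extend e z (fun _ => b₀) j) = ∑ i, F (w i) (z i) := by
  refine (Fintype.sum_of_injective e he _ _ (fun j hj => ?_) fun i => ?_).symm
  · rw [extend_apply' _ _ _ hj, hF]
  · rw [he.extend_apply, he.extend_apply]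

section Caratheodory

variable {E : Type*} [AddCommGroup E] [Module ℝ E] [FiniteDimensional ℝ E]

/-- By Carathéodory, `finrank ℝ E + 1` points of `S` suffice for every point of the hull; unused
slots get weight `0` and an arbitrary point `s₀ ∈ S`. -/
theorem convexHull_eq_image_stdSimplex {S : Set E} {s₀ : E} (hs₀ : s₀ ∈ S) :
    convexHull ℝ S = (fun p : (Fin (finrank ℝ E + 1) → ℝ) × (Fin (finrank ℝ E + 1) → E) =>
        ∑ i, p.1 i • p.2 i) '' (stdSimplex ℝ _ ×ˢ univ.pi fun _ => S) := by
  refine Subset.antisymm ?_ ?_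
  · intro x hx
    obtain ⟨ι, _, z, w, hzS, hz, hw₀, hw₁, rfl⟩ := eq_pos_convex_span_of_mem_convexHull hx
    have hcard : Fintype.card ι ≤ Fintype.card (Fin (finrank ℝ E + 1)) := by
      simpa using hz.card_le_finrank_succ.trans
        (Nat.succ_le_succ (Submodule.finrank_le (vectorSpan ℝ (range z))))
    obtain ⟨e⟩ := Embedding.nonempty_of_card_le hcard
    refine ⟨(extend e w fun _ => 0, extend e z fun _ => s₀), ⟨⟨fun j => ?_, ?_⟩, fun j _ => ?_⟩, ?_⟩
    · by_cases hj : ∃ i, e i = j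
      · obtain ⟨i, rfl⟩ := hj
        simpa [e.injective.extend_apply] using (hw₀ i).le
      · simp [extend_apply' _ _ _ hj]
    · simpa [hw₁] using e.injective.sum_extend₂ (fun a _ => a) w z s₀ fun _ => rfl
    · by_cases hj : ∃ i, e i = j
      · obtain ⟨i, rfl⟩ := hj
        simpa [e.injective.extend_apply] using hzS (mem_range_self i)
      · simpa [extend_apply' _ _ _ hj] using hs₀
    · exact e.injective.sum_extend₂ (fun a y => a • y) w z s₀ (zero_smul ℝ)
  · rintro _ ⟨⟨w, z⟩, ⟨hw, hz⟩, rfl⟩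
    exact (convex_convexHull ℝ S).sum_mem (fun i _ => hw.1 i) hw.2
      fun i _ => subset_convexHull ℝ S (hz i (mem_univ i))

end Caratheodory

theorem IsCompact.convexHull {E : Type*} [AddCommGroup E] [Module ℝ E] [TopologicalSpace E]
    [ContinuousAdd E] [ContinuousSMul ℝ E] [FiniteDimensional ℝ E] {S : Set E}
    (hS : IsCompact S) : IsCompact (convexHull ℝ S) := by
  obtain rfl | ⟨s₀, hs₀⟩ := S.eq_empty_or_nonempty
  · simp
  rw [convexHull_eq_image_stdSimplex hs₀]
  exact ((isCompact_stdSimplex ℝ _).prod (isCompact_univ_pi fun _ => hS)).image <|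
    continuous_finsetSum _ fun i _ =>
      ((continuous_apply i).comp continuous_fst).smul ((continuous_apply i).comp continuous_snd)

theorem IsPreconnected.exists_apply_eq_of_mem_convexHull {E : Type*} [AddCommGroup E]
    [Module ℝ E] [TopologicalSpace E] {S : Set E} (hS : IsPreconnected S) (f : E →L[ℝ] ℝ)
    {x : E} (hx : x ∈ convexHull ℝ S) : ∃ s ∈ S, f s = f x := by
  have hfx : f x ∈ convexHull ℝ (f '' S) := by
    have := (f : E →ₗ[ℝ] ℝ).image_convexHull S
    rw [ContinuousLinearMap.coe_coe] at this
    exact this ▸ mem_image_of_mem f hx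
  rwa [(hS.image f f.continuous.continuousOn).convex.convexHull_eq] at hfx

section InnerProductSpace

variable {E : Type*} [NormedAddCommGroup E] [InnerProductSpace ℝ E]

theorem exists_inner_lt_of_notMem_convexHull [CompleteSpace E] {S : Set E}
    (hS : IsClosed (convexHull ℝ S)) {x : E} (hx : x ∉ convexHull ℝ S) :
    ∃ u : E, ∀ s ∈ S, inner ℝ u s < inner ℝ u x := by
  obtain ⟨f, r, hfS, hfx⟩ := geometric_hahn_banach_closed_point (convex_convexHull ℝ S) hS hx
  refine ⟨(InnerProductSpace.toDual ℝ E).symm f, fun s hs => ?_⟩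
  simp only [InnerProductSpace.toDual_symm_apply]
  exact (hfS s (subset_convexHull ℝ S hs)).trans hfx

theorem subset_convexHull_of_forall_supportLine_meets [CompleteSpace E] {D S : Set E}
    (hD : IsCompact D) (hS : IsClosed (convexHull ℝ S)) (hSne : S.Nonempty)
    (h : ∀ (u : E) (c : ℝ), u ≠ 0 → ({x | inner ℝ u x = c} ∩ D).Nonempty →
      (∀ x ∈ D, inner ℝ u x ≤ c) → ({x | inner ℝ u x = c} ∩ S).Nonempty) :
    D ⊆ convexHull ℝ S := by
  intro x hxD
  by_contra hxS
  obtain ⟨u, hu⟩ := exists_inner_lt_of_notMem_convexHull hS hxS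
  have hu₀ : u ≠ 0 := by
    rintro rfl
    obtain ⟨s, hs⟩ := hSne
    simpa using hu s hs
  obtain ⟨m, hmD, hm⟩ := hD.exists_isMaxOn ⟨x, hxD⟩
    (continuous_const.inner continuous_id : Continuous fun y : E => inner ℝ u y).continuousOn
  obtain ⟨s, hsm, hsS⟩ := h u (inner ℝ u m) hu₀ ⟨m, rfl, hmD⟩ fun y hy => hm hy
  exact (hu s hsS).not_ge (hsm.symm ▸ hm hxD)

end InnerProductSpace

theorem connected_meets_support_lines_iff_subset_hull_general
    (D S : Set (EuclideanSpace ℝ (Fin 2)))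
    (hDcomp : IsCompact D)
    (hScomp : IsCompact S) (hSconn : IsConnected S) :
    (∀ (u : EuclideanSpace ℝ (Fin 2)) (c : ℝ), u ≠ 0 →
        ({x | (inner ℝ u x : ℝ) = c} ∩ D).Nonempty →
        (∀ x ∈ D, (inner ℝ u x : ℝ) ≤ c) →
        ({x | (inner ℝ u x : ℝ) = c} ∩ S).Nonempty)
      ↔ D ⊆ convexHull ℝ S := by
  refine ⟨subset_convexHull_of_forall_supportLine_meets hDcomp hScomp.convexHull.isClosed
    hSconn.nonempty, ?_⟩
  rintro hDS u c - ⟨x, hxc, hxD⟩ -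
  obtain ⟨s, hsS, hsx⟩ :=
    hSconn.isPreconnected.exists_apply_eq_of_mem_convexHull (innerSL ℝ u) (hDS hxD)
  exact ⟨s, hsx.trans hxc, hsS⟩

/-- A connected compact set `S` in the plane intersects every support line of a
convex compact set `D` if and only if `D ⊆ convexHull ℝ S`.  A support line is a
line `{x | ⟪u, x⟫ = c}` (with `u ≠ 0`) meeting `D` such that `D` lies entirely in
one of the two closed half-planes it determines. -/
theorem connected_meets_support_lines_iff_subset_hull
    (D S : Set (EuclideanSpace ℝ (Fin 2)))
    (hDconv : Convex ℝ D) (hDcomp : IsCompact D) (hDne : D.Nonempty)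
    (hScomp : IsCompact S) (hSconn : IsConnected S) :
    (∀ (u : EuclideanSpace ℝ (Fin 2)) (c : ℝ), u ≠ 0 →
        ({x | (inner ℝ u x : ℝ) = c} ∩ D).Nonempty →
        (∀ x ∈ D, (inner ℝ u x : ℝ) ≤ c) →
        ({x | (inner ℝ u x : ℝ) = c} ∩ S).Nonempty)
      ↔ D ⊆ convexHull ℝ S :=
  connected_meets_support_lines_iff_subset_hull_general D S hDcomp hScomp hSconn
end

section
/- The curve consisting of a semicircle of the unit circle extended at each end by a tangent segment of length 1 has total length π + 2, and its convex hull contains the closed unit disk. -/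
/-!
The curve has unit speed. The tangent segments are isometric images of intervals. The arc is
`1`-Lipschitz (a chord is shorter than its arc), and the chord over a parameter interval of
length `h` has length `2 sin (h / 2) = h + o(h)`, so the inscribed polygons with `n` equal sides
have length tending to the parameter length; hence the length of each piece, and by additivity
of the whole curve, is the length of its parameter interval.

A point `(x, y)` of the closed unit disk lies on the vertical segment joining `(x, -1)`, which is
on the chord between the free ends `(±1, -1)` of the tangents, to the point `(x, √(1 - x²))` of
the semicircle.
-/

open Real

/-- The point `(a, b)` of the Euclidean plane. -/
noncomputable def pt (a b : ℝ) : EuclideanSpace ℝ (Fin 2) :=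
  (EuclideanSpace.equiv (Fin 2) ℝ).symm ![a, b]

open Set Filter Topology

section UnitSpeed

variable {E : Type*} [PseudoMetricSpace E] {f : ℝ → E}

theorem ofReal_sub_le_eVariationOn_Icc_of_chord {a b : ℝ} (hab : a < b) (ρ : ℝ → ℝ)
    (hρ : Tendsto (fun h => ρ h / h) (𝓝[>] 0) (𝓝 1))
    (hchord : ∀ s ∈ Icc a b, ∀ t ∈ Icc a b, s ≤ t → ρ (t - s) ≤ dist (f s) (f t)) :
    ENNReal.ofReal (b - a) ≤ eVariationOn f (Icc a b) := by
  have hpoly : ∀ n : ℕ, ENNReal.ofReal ((b - a) * (ρ ((b - a) / n) / ((b - a) / n))) ≤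
      eVariationOn f (Icc a b) := by
    intro n
    rcases n.eq_zero_or_pos with rfl | hn
    · simp
    set h := (b - a) / n with h_def
    have hn' : (0 : ℝ) < n := by exact_mod_cast hn
    have hnh : n * h = b - a := by rw [h_def]; field_simp
    have hh : 0 < h := div_pos (sub_pos.2 hab) hn'
    have hmono : Monotone fun i : ℕ => a + i * h := fun i j hij => by dsimp only; gcongr
    have hmem : ∀ i ≤ n, a + i * h ∈ Icc a b := fun i hi => by
      have : (i : ℝ) * h ≤ n * h := by gcongr
      exact ⟨le_add_of_nonneg_right (by positivity), by linarith⟩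
    calc ENNReal.ofReal ((b - a) * (ρ h / h))
        = ∑ i ∈ Finset.range n, ENNReal.ofReal (ρ h) := by
          rw [Finset.sum_const, Finset.card_range, nsmul_eq_mul, ← ENNReal.ofReal_natCast,
            ← ENNReal.ofReal_mul hn'.le, ← hnh]
          congr 1
          field_simp
      _ ≤ ∑ i ∈ Finset.range n, edist (f (a + (i + 1 : ℕ) * h)) (f (a + i * h)) := by
          refine Finset.sum_le_sum fun i hi => ?_
          have hi : i < n := Finset.mem_range.1 hi
          rw [edist_comm, edist_dist]
          refine ENNReal.ofReal_le_ofReal ?_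
          convert hchord _ (hmem i hi.le) _ (hmem (i + 1) hi) (hmono i.le_succ) using 2
          push_cast; ring
      _ ≤ eVariationOn f (Icc a b) :=
          eVariationOn.sum_le_of_monotoneOn_Iic (hmono.monotoneOn _) hmem
  have hlim : Tendsto (fun n : ℕ => (b - a) / n) atTop (𝓝[>] 0) :=
    tendsto_nhdsWithin_iff.2 ⟨tendsto_const_div_atTop_nhds_zero_nat _,
      (eventually_gt_atTop 0).mono fun n hn => div_pos (sub_pos.2 hab) (by exact_mod_cast hn)⟩
  refine le_of_tendsto' (x := atTop) ?_ hpoly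
  simpa using ENNReal.tendsto_ofReal ((hρ.comp hlim).const_mul (b - a))

theorem hasUnitSpeedOn_univ_of_chord (ρ : ℝ → ℝ) (hρ : Tendsto (fun h => ρ h / h) (𝓝[>] 0) (𝓝 1))
    (hlip : LipschitzWith 1 f) (hchord : ∀ s t, s ≤ t → ρ (t - s) ≤ dist (f s) (f t)) :
    HasUnitSpeedOn f univ := by
  intro x _ y _
  rw [univ_inter, NNReal.coe_one, one_mul]
  rcases lt_or_ge x y with hxy | hyx
  · refine le_antisymm ?_
      (ofReal_sub_le_eVariationOn_Icc_of_chord hxy ρ hρ fun s _ t _ => hchord s t)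
    calc eVariationOn f (Icc x y) = eVariationOn (f ∘ id) (Icc x y) := rfl
      _ ≤ 1 * eVariationOn id (Icc x y) :=
          hlip.lipschitzOnWith.comp_eVariationOn_le (mapsTo_univ _ _)
      _ = ENNReal.ofReal (y - x) := by rw [one_mul, eVariationOn_id_Icc]
  · rw [ENNReal.ofReal_of_nonpos (sub_nonpos.2 hyx)]
    exact eVariationOn.subsingleton f (subsingleton_Icc_of_ge hyx)

theorem Isometry.hasUnitSpeedOn_univ (hf : Isometry f) : HasUnitSpeedOn f univ :=
  hasUnitSpeedOn_univ_of_chord id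
    (tendsto_const_nhds.congr' <| eventually_nhdsWithin_of_forall fun _ hh =>
      (div_self (ne_of_gt hh)).symm)
    hf.lipschitz fun s t _ => by
      rw [hf.dist_eq, Real.dist_eq, abs_sub_comm]; exact le_abs_self _

theorem HasUnitSpeedOn.Icc_of_eqOn {g : ℝ → E} {a b : ℝ} (hg : HasUnitSpeedOn g univ)
    (hfg : EqOn f g (Icc a b)) : HasUnitSpeedOn f (Icc a b) := by
  intro x hx y hy
  have hsub : Icc x y ⊆ Icc a b := Icc_subset_Icc hx.1 hy.2
  rw [inter_eq_right.2 hsub, eVariationOn.eq_of_eqOn (hfg.mono hsub), ← univ_inter (Icc x y)]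
  exact hg trivial trivial

end UnitSpeed

theorem pt_eta (p : EuclideanSpace ℝ (Fin 2)) : pt (p 0) (p 1) = p := by
  ext i; fin_cases i <;> rfl

theorem dist_pt (a b c d : ℝ) : dist (pt a b) (pt c d) = √((a - c) ^ 2 + (b - d) ^ 2) := by
  simp [EuclideanSpace.dist_eq, Fin.sum_univ_two, pt, Real.dist_eq, sq_abs]

theorem norm_pt (a b : ℝ) : ‖pt a b‖ = √(a ^ 2 + b ^ 2) := by
  simp [EuclideanSpace.norm_eq, Fin.sum_univ_two, pt, sq_abs]

theorem smul_pt_add_smul_pt (k l a b c d : ℝ) :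
    k • pt a b + l • pt c d = pt (k * a + l * c) (k * b + l * d) := by
  ext i; fin_cases i <;> simp [pt]

theorem pt_mem_segment_of_mem_Icc_fst {x₁ x₂ x : ℝ} (y : ℝ) (hx : x ∈ Icc x₁ x₂) :
    pt x y ∈ segment ℝ (pt x₁ y) (pt x₂ y) := by
  obtain ⟨k, l, hk, hl, hkl, rfl⟩ := Icc_subset_segment hx
  refine ⟨k, l, hk, hl, hkl, ?_⟩
  rw [smul_pt_add_smul_pt, ← add_mul, hkl, one_mul, smul_eq_mul, smul_eq_mul]

theorem pt_mem_segment_of_mem_Icc_snd (x : ℝ) {y₁ y₂ y : ℝ} (hy : y ∈ Icc y₁ y₂) :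
    pt x y ∈ segment ℝ (pt x y₁) (pt x y₂) := by
  obtain ⟨k, l, hk, hl, hkl, rfl⟩ := Icc_subset_segment hy
  refine ⟨k, l, hk, hl, hkl, ?_⟩
  rw [smul_pt_add_smul_pt, ← add_mul, hkl, one_mul, smul_eq_mul, smul_eq_mul]

theorem dist_pt_cos_sin (s t : ℝ) :
    dist (pt (cos s) (sin s)) (pt (cos t) (sin t)) = 2 * |sin ((s - t) / 2)| := by
  have hsq : (cos s - cos t) ^ 2 + (sin s - sin t) ^ 2 = (2 * sin ((s - t) / 2)) ^ 2 := by
    have h := sin_sq_eq_half_sub ((s - t) / 2)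
    rw [show 2 * ((s - t) / 2) = s - t by ring, cos_sub] at h
    linear_combination sin_sq_add_cos_sq s + sin_sq_add_cos_sq t - 4 * h
  rw [dist_pt, hsq, sqrt_sq_eq_abs, abs_mul, abs_two]

theorem hasUnitSpeedOn_cos_sin_sub (c : ℝ) :
    HasUnitSpeedOn (fun t => pt (cos (t - c)) (sin (t - c))) univ := by
  have hdist (s t : ℝ) :
      dist (pt (cos (s - c)) (sin (s - c))) (pt (cos (t - c)) (sin (t - c))) =
        2 * |sin ((s - t) / 2)| := by
    rw [dist_pt_cos_sin, sub_sub_sub_cancel_right]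
  refine hasUnitSpeedOn_univ_of_chord (fun h => 2 * sin (h / 2)) ?_ ?_ fun s t _ => ?_
  · -- `2 sin (h / 2) / h = sinc (h / 2)`
    refine ((continuous_sinc.comp (continuous_id.div_const 2)).tendsto' 0 1 (by simp)).mono_left
      nhdsWithin_le_nhds |>.congr' (eventually_nhdsWithin_of_forall fun h hh => ?_)
    simp only [Function.comp_apply, id, sinc_of_ne_zero (div_ne_zero (ne_of_gt hh) two_ne_zero)]
    field_simp
  · refine LipschitzWith.of_dist_le_mul fun s t => ?_
    rw [hdist, NNReal.coe_one, one_mul, Real.dist_eq]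
    calc 2 * |sin ((s - t) / 2)| ≤ 2 * |(s - t) / 2| := by grw [abs_sin_le_abs]
      _ = |s - t| := by rw [abs_div, abs_two]; ring
  · rw [hdist, ← neg_sub t s, neg_div, sin_neg, abs_neg]
    gcongr
    exact le_abs_self _

theorem closedBall_subset_convexHull_of_upperSemicircle {S : Set (EuclideanSpace ℝ (Fin 2))}
    (hS : ∀ θ ∈ Icc 0 π, pt (cos θ) (sin θ) ∈ S) (hright : pt 1 (-1) ∈ S)
    (hleft : pt (-1) (-1) ∈ S) :
    Metric.closedBall 0 1 ⊆ convexHull ℝ S := by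
  intro p hp
  rw [← pt_eta p]
  set x := p 0
  set y := p 1
  have hxy : x ^ 2 + y ^ 2 ≤ 1 := by
    rw [mem_closedBall_zero_iff, ← pt_eta p, norm_pt, sqrt_le_one] at hp
    exact hp
  have hx : x ∈ Icc (-1) 1 := by constructor <;> nlinarith
  have hy : y ∈ Icc (-1) √(1 - x ^ 2) := ⟨by nlinarith, le_sqrt_of_sq_le (by linarith)⟩
  have hbottom : pt x (-1) ∈ convexHull ℝ S :=
    (convex_convexHull ℝ S).segment_subset (subset_convexHull ℝ S hleft)
      (subset_convexHull ℝ S hright) (pt_mem_segment_of_mem_Icc_fst (-1) hx)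
  have htop : pt x √(1 - x ^ 2) ∈ convexHull ℝ S := by
    have := hS (arccos x) ⟨arccos_nonneg x, arccos_le_pi x⟩
    rw [cos_arccos hx.1 hx.2, sin_arccos] at this
    exact subset_convexHull ℝ S this
  exact (convex_convexHull ℝ S).segment_subset hbottom htop (pt_mem_segment_of_mem_Icc_snd x hy)

noncomputable def tangentSemicircle (t : ℝ) : EuclideanSpace ℝ (Fin 2) :=
  if t ≤ 1 then pt 1 (t - 1)
  else if t ≤ 1 + π then pt (cos (t - 1)) (sin (t - 1))
  else pt (-1) (-(t - 1 - π))

theorem tangentSemicircle_eqOn_Iic :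
    EqOn tangentSemicircle (fun t => pt 1 (t - 1)) (Iic 1) := fun _ ht =>
  if_pos ht

theorem tangentSemicircle_eqOn_Icc :
    EqOn tangentSemicircle (fun t => pt (cos (t - 1)) (sin (t - 1))) (Icc 1 (1 + π)) := by
  intro t ht
  rcases ht.1.eq_or_lt with rfl | h1
  · simp [tangentSemicircle]
  · simp [tangentSemicircle, not_le.2 h1, ht.2]

theorem tangentSemicircle_eqOn_Ici :
    EqOn tangentSemicircle (fun t => pt (-1) (-(t - 1 - π))) (Ici (1 + π)) := by
  intro t ht
  rcases (mem_Ici.1 ht).eq_or_lt with rfl | h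
  · simp [tangentSemicircle, pi_pos]
  · simp [tangentSemicircle, not_le.2 h, not_le.2 ((le_add_of_nonneg_right pi_pos.le).trans_lt h)]

theorem hasUnitSpeedOn_tangentSemicircle : HasUnitSpeedOn tangentSemicircle (Icc 0 (π + 2)) := by
  have h₁ : HasUnitSpeedOn tangentSemicircle (Icc 0 1) :=
    (Isometry.of_dist_eq fun s t => by
      rw [dist_pt, Real.dist_eq, ← sqrt_sq_eq_abs]; ring_nf).hasUnitSpeedOn_univ.Icc_of_eqOn
      (tangentSemicircle_eqOn_Iic.mono Icc_subset_Iic_self)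
  have h₂ : HasUnitSpeedOn tangentSemicircle (Icc 1 (1 + π)) :=
    (hasUnitSpeedOn_cos_sin_sub 1).Icc_of_eqOn tangentSemicircle_eqOn_Icc
  have h₃ : HasUnitSpeedOn tangentSemicircle (Icc (1 + π) (π + 2)) :=
    (Isometry.of_dist_eq fun s t => by
      rw [dist_pt, Real.dist_eq, ← sqrt_sq_eq_abs]; ring_nf).hasUnitSpeedOn_univ.Icc_of_eqOn
      (tangentSemicircle_eqOn_Ici.mono Icc_subset_Ici_self)
  exact (h₁.Icc_Icc h₂).Icc_Icc h₃

/-- The curve of Theorem 2: a semicircle of the unit circle extended at each end by a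
tangent segment of length `1`, parametrized by arc length on `[0, π + 2]`.  It has
total length `π + 2` and its convex hull contains the closed unit disk. -/
theorem semicircle_with_tangents :
    ∃ f : ℝ → EuclideanSpace ℝ (Fin 2),
      (∀ t, f t =
        if t ≤ 1 then pt 1 (t - 1)
        else if t ≤ 1 + Real.pi then pt (Real.cos (t - 1)) (Real.sin (t - 1))
        else pt (-1) (-(t - 1 - Real.pi))) ∧
      eVariationOn f (Set.Icc 0 (Real.pi + 2)) = ENNReal.ofReal (Real.pi + 2) ∧
      Metric.closedBall (0 : EuclideanSpace ℝ (Fin 2)) 1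
        ⊆ convexHull ℝ (f '' Set.Icc 0 (Real.pi + 2)) := by
  have hπ : 0 ≤ π + 2 := by positivity
  refine ⟨tangentSemicircle, fun t => rfl, ?_,
    closedBall_subset_convexHull_of_upperSemicircle (fun θ hθ => ?_) ?_ ?_⟩
  · simpa using hasUnitSpeedOn_tangentSemicircle (left_mem_Icc.2 hπ) (right_mem_Icc.2 hπ)
  · have hθ' : 1 + θ ∈ Icc 1 (1 + π) := ⟨by linarith [hθ.1], by linarith [hθ.2]⟩
    refine ⟨1 + θ, Icc_subset_Icc zero_le_one (by linarith) hθ', ?_⟩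
    simp [tangentSemicircle_eqOn_Icc hθ']
  · exact ⟨0, left_mem_Icc.2 hπ, by simp [tangentSemicircle]⟩
  · refine ⟨π + 2, right_mem_Icc.2 hπ, ?_⟩
    rw [tangentSemicircle_eqOn_Ici (mem_Ici.2 (by linarith))]
    ring_nf
end
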